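/- arXiv:2204.00736 — 2 statements merged into one kernel-verified Lean document; each statement's English description precedes it below -/
import Mathlib

section
/- Let H be an N×N real symmetric tridiagonal matrix with N ≥ 2 all of whose off-diagonal entries H_{k,k+1}, 1 ≤ k ≤ N−1, are nonzero, so that H has pairwise distinct eigenvalues λ_1 < λ_2 < ⋯ < λ_N. For each i set M_i = λ_i I_N − H. Then for every i ∈ {1, …, N}: (i) for every k ∈ {1, …, N}: |det((M_i)_{k|k})| < ∏_{j ≠ i} |λ_i − λ_j|; and (ii) for every k ∈ {1, …, N−1}: √2 · |det((M_i)_{k|k+1})| < ∏_{j ≠ i} |λ_i − λ_j|. -/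
/-!
As `λᵢ` is an eigenvalue, `Mᵢ = λᵢ I − H` is singular, and since `H` is tridiagonal with nonzero
off-diagonal entries, a kernel vector of `Mᵢ` is determined by its first coordinate. The columns
of `A = adj Mᵢ` lie in that kernel, so they are proportional; with the symmetry of `A` this gives
`A[p,q]² = A[p,p] A[q,q]`, so the diagonal entries `dₖ = A[k,k]` all have the same sign. Their sum
is `tr A = χ_H'(λᵢ) = ∏_{j≠i} (λᵢ − λⱼ)`, hence `∑ₖ |dₖ| = ∏_{j≠i} |λᵢ − λⱼ|`.
The minors in (i) and (ii) are, up to sign, `dₖ` and `A[k+1,k]`. Bound (i) holds because some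
`d_q` with `q ≠ k` is nonzero: otherwise column `k` of `A` would be a kernel vector supported at
`k`, forcing `dₖ = 0` as column `k` of `Mᵢ` is nonzero, and then `tr A = 0`. Bound (ii) follows
from `2 A[k+1,k]² = 2 dₖ dₖ₊₁ ≤ (|dₖ| + |dₖ₊₁|)² / 2`.
-/

open Polynomial

theorem abs_sum_eq_sum_abs_of_mul_nonneg {ι α : Type*} [Ring α] [LinearOrder α]
    [IsStrictOrderedRing α] (s : Finset ι) (f : ι → α) (h : ∀ p q, 0 ≤ f p * f q) :
    |∑ i ∈ s, f i| = ∑ i ∈ s, |f i| := by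
  by_cases hneg : ∃ j, f j < 0
  · obtain ⟨j, hj⟩ := hneg
    have hnonpos : ∀ i, f i ≤ 0 := fun i => nonpos_of_mul_nonneg_right (h j i) hj
    rw [← abs_neg, ← Finset.sum_neg_distrib,
      Finset.abs_sum_of_nonneg' fun i => neg_nonneg.mpr (hnonpos i)]
    exact Finset.sum_congr rfl fun i _ => (abs_of_nonpos (hnonpos i)).symm
  · push Not at hneg
    rw [Finset.abs_sum_of_nonneg' hneg]
    exact Finset.sum_congr rfl fun i _ => (abs_of_nonneg (hneg i)).symm

theorem sqrt_two_mul_abs_lt_of_sq_eq_mul {a x y T : ℝ} (ha : a ^ 2 = x * y)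
    (hxy : |x| + |y| ≤ T) (hT : 0 < T) : √2 * |a| < T := by
  refine lt_of_pow_lt_pow_left₀ 2 hT.le ?_
  rw [mul_pow, Real.sq_sqrt zero_le_two, sq_abs, ha]
  nlinarith [abs_mul x y, le_abs_self (x * y), sq_nonneg (|x| - |y|), abs_nonneg x, abs_nonneg y]

namespace Matrix

section CommRing

variable {n R : Type*} [Fintype n] [CommRing R] {M : Matrix n n R} {j : n}

theorem mul_eq_mul_of_mulVec_eq_zero [NoZeroDivisors R]
    (hker : ∀ v, M *ᵥ v = 0 → v j = 0 → v = 0)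
    {x y : n → R} (hx : M *ᵥ x = 0) (hy : M *ᵥ y = 0) (p q : n) :
    x p * y q = x q * y p := by
  by_cases hxj : x j = 0
  · simp [hker x hx hxj]
  have hz : ∀ r, x j * y r = y j * x r := by
    have hz0 := hker (x j • y - y j • x) (by simp [mulVec_sub, mulVec_smul, hx, hy])
      (by simp [mul_comm])
    intro r
    simpa [sub_eq_zero] using congrFun hz0 r
  apply mul_left_cancel₀ hxj
  linear_combination x p * hz q - x q * hz p

variable [DecidableEq n]

theorem derivative_det (P : Matrix n n R[X]) :
    derivative P.det = ∑ k, (P.updateCol k fun r => derivative (P r k)).det := by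
  simp_rw [det_apply', map_sum, derivative_intCast_mul, derivative_prod_finset, Finset.mul_sum]
  rw [Finset.sum_comm]
  refine Finset.sum_congr rfl fun k _ => Finset.sum_congr rfl fun σ _ => ?_
  rw [← Finset.prod_erase_mul _ _ (Finset.mem_univ k),
    Finset.prod_congr rfl fun i hi => updateCol_ne (Finset.ne_of_mem_erase hi), updateCol_self]

theorem derivative_charpoly (A : Matrix n n R) :
    derivative A.charpoly = trace (adjugate (charmatrix A)) := by
  rw [charpoly, derivative_det, trace]
  refine Finset.sum_congr rfl fun k _ => ?_
  have hcol : (fun r => derivative (charmatrix A r k)) = Pi.single k 1 := by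
    ext r : 1
    by_cases h : r = k <;> simp [h]
  rw [hcol, ← det_transpose, ← updateRow_transpose, ← adjugate_apply, ← adjugate_transpose]
  rfl

theorem eval_derivative_charpoly (A : Matrix n n R) (μ : R) :
    (derivative A.charpoly).eval μ = trace (adjugate (scalar n μ - A)) := by
  have hmap : (evalRingHom μ).mapMatrix (charmatrix A) = scalar n μ - A := by
    ext i j
    by_cases h : i = j <;> simp [h]
  rw [derivative_charpoly, ← hmap, ← RingHom.map_adjugate, ← coe_evalRingHom,
    AddMonoidHom.map_trace]
  rfl

theorem det_scalar_sub_eq_zero_of_charpoly_eq_prod {A : Matrix n n R} {lam : n → R}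
    (hchar : A.charpoly = ∏ j, (X - C (lam j))) (i : n) : (scalar n (lam i) - A).det = 0 := by
  rw [← eval_charpoly, hchar, eval_prod]
  exact Finset.prod_eq_zero (Finset.mem_univ i) (by simp)

theorem trace_adjugate_scalar_sub_of_charpoly_eq_prod {A : Matrix n n R} {lam : n → R}
    (hchar : A.charpoly = ∏ j, (X - C (lam j))) (i : n) :
    trace (scalar n (lam i) - A).adjugate = ∏ j ∈ Finset.univ.erase i, (lam i - lam j) := by
  rw [← eval_derivative_charpoly, hchar, ← Lagrange.nodal,
    Lagrange.eval_nodal_derivative_eval_node_eq (Finset.mem_univ i), Lagrange.eval_nodal]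

theorem mulVec_adjugate_col_eq_zero (hdet : M.det = 0) (k : n) :
    M *ᵥ (fun p => M.adjugate p k) = 0 := by
  ext p
  simpa [mul_apply, mulVec, dotProduct, hdet] using congrFun (congrFun (mul_adjugate M) p) k

variable [NoZeroDivisors R]

theorem adjugate_mul_adjugate_comm (hdet : M.det = 0)
    (hker : ∀ v, M *ᵥ v = 0 → v j = 0 → v = 0) (p q k l : n) :
    M.adjugate p k * M.adjugate q l = M.adjugate q k * M.adjugate p l :=
  mul_eq_mul_of_mulVec_eq_zero hker (mulVec_adjugate_col_eq_zero hdet k)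
    (mulVec_adjugate_col_eq_zero hdet l) p q

theorem IsSymm.adjugate_sq (hM : M.IsSymm) (hdet : M.det = 0)
    (hker : ∀ v, M *ᵥ v = 0 → v j = 0 → v = 0) (p q : n) :
    M.adjugate p q ^ 2 = M.adjugate p p * M.adjugate q q := by
  rw [adjugate_mul_adjugate_comm hdet hker p q p q, hM.adjugate.apply q p, sq]

theorem IsSymm.exists_ne_adjugate_apply_self_ne_zero (hM : M.IsSymm) (hdet : M.det = 0)
    (hker : ∀ v, M *ᵥ v = 0 → v j = 0 → v = 0) (htr : trace M.adjugate ≠ 0)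
    {p k : n} (hM₀ : M p k ≠ 0) : ∃ q ≠ k, M.adjugate q q ≠ 0 := by
  by_contra! hdiag
  have hcol : ∀ q ≠ k, M.adjugate q k = 0 := fun q hq =>
    pow_eq_zero_iff two_ne_zero |>.mp <| by rw [hM.adjugate_sq hdet hker, hdiag q hq, zero_mul]
  have hkk : M.adjugate k k = 0 := by
    have hrow := congrFun (mulVec_adjugate_col_eq_zero hdet k) p
    rw [mulVec, dotProduct, Finset.sum_eq_single k (fun q _ hq => by rw [hcol q hq, mul_zero])
      (by simp)] at hrow
    exact (mul_eq_zero.mp hrow).resolve_left hM₀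
  refine htr (Finset.sum_eq_zero fun q _ => ?_)
  by_cases hq : q = k
  · rw [diag_apply, hq, hkk]
  · exact hdiag q hq

end CommRing

section Ordered

variable {n R : Type*} [Fintype n] [DecidableEq n] [CommRing R] [LinearOrder R]
  [IsStrictOrderedRing R] {M : Matrix n n R} {j : n}

theorem IsSymm.sum_abs_adjugate_apply_self (hM : M.IsSymm) (hdet : M.det = 0)
    (hker : ∀ v, M *ᵥ v = 0 → v j = 0 → v = 0) :
    ∑ k, |M.adjugate k k| = |trace M.adjugate| :=
  (abs_sum_eq_sum_abs_of_mul_nonneg _ _ fun p q => hM.adjugate_sq hdet hker p q ▸ sq_nonneg _).symm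

theorem IsSymm.abs_adjugate_apply_self_lt (hM : M.IsSymm) (hdet : M.det = 0)
    (hker : ∀ v, M *ᵥ v = 0 → v j = 0 → v = 0) (htr : trace M.adjugate ≠ 0)
    {p k : n} (hM₀ : M p k ≠ 0) : |M.adjugate k k| < |trace M.adjugate| := by
  obtain ⟨q, hqk, hq⟩ := hM.exists_ne_adjugate_apply_self_ne_zero hdet hker htr hM₀
  rw [← hM.sum_abs_adjugate_apply_self hdet hker]
  exact Finset.single_lt_sum (f := fun j => |M.adjugate j j|) hqk (Finset.mem_univ _)
    (Finset.mem_univ _) (abs_pos.mpr hq) fun _ _ _ => abs_nonneg _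

end Ordered

theorem IsSymm.sqrt_two_mul_abs_adjugate_lt {n : Type*} [Fintype n] [DecidableEq n]
    {M : Matrix n n ℝ} {j : n} (hM : M.IsSymm) (hdet : M.det = 0)
    (hker : ∀ v, M *ᵥ v = 0 → v j = 0 → v = 0) (htr : trace M.adjugate ≠ 0)
    {p q : n} (hpq : p ≠ q) : √2 * |M.adjugate p q| < |trace M.adjugate| := by
  refine sqrt_two_mul_abs_lt_of_sq_eq_mul (hM.adjugate_sq hdet hker p q) ?_ (abs_pos.mpr htr)
  rw [← hM.sum_abs_adjugate_apply_self hdet hker,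
    ← Finset.sum_pair (f := fun j => |M.adjugate j j|) hpq]
  exact Finset.sum_le_univ_sum_of_nonneg fun _ => abs_nonneg _

theorem eq_zero_of_mulVec_eq_zero_of_apply_zero_eq_zero {R : Type*} [CommRing R] [NoZeroDivisors R]
    {m : ℕ}
    {M : Matrix (Fin (m + 1)) (Fin (m + 1)) R}
    (hhess : ∀ p q : Fin (m + 1), (p : ℕ) + 1 < q → M p q = 0)
    (hsup : ∀ k : Fin m, M k.castSucc k.succ ≠ 0)
    {v : Fin (m + 1) → R} (hv : M *ᵥ v = 0) (h0 : v 0 = 0) : v = 0 := by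
  suffices h : ∀ r : Fin (m + 1), ∀ q ≤ r, v q = 0 from funext fun q => h q q le_rfl
  refine Fin.induction (fun q hq => by rwa [Fin.le_zero_iff.mp hq]) fun k ih => ?_
  have hsucc : v k.succ = 0 := by
    have hrow := congrFun hv k.castSucc
    rw [mulVec, dotProduct, Finset.sum_eq_single k.succ (fun q _ hq => ?_) (by simp)] at hrow
    · exact (mul_eq_zero.mp hrow).resolve_left (hsup k)
    rcases le_or_gt q k.castSucc with hle | hgt
    · rw [ih q hle, mul_zero]
    · rw [hhess _ _ (by simp [Fin.lt_def, Fin.ext_iff] at hgt hq ⊢; omega), zero_mul]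
  intro q hq
  rcases eq_or_ne q k.succ with rfl | hne
  · exact hsucc
  · exact ih q (by simp [Fin.le_iff_val_le_val, Fin.ext_iff] at hq hne ⊢; omega)

theorem IsSymm.exists_apply_ne_zero {α : Type*} [Zero α] {m : ℕ}
    {M : Matrix (Fin (m + 2)) (Fin (m + 2)) α} (hM : M.IsSymm)
    (hsup : ∀ k : Fin (m + 1), M k.castSucc k.succ ≠ 0) (k : Fin (m + 2)) :
    ∃ p, M p k ≠ 0 := by
  cases k using Fin.cases with
  | zero => exact ⟨1, by rw [hM.apply]; exact hsup 0⟩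
  | succ k => exact ⟨k.castSucc, hsup k⟩

theorem abs_det_submatrix_succAbove {R : Type*} [CommRing R] [LinearOrder R]
    [IsStrictOrderedRing R] {m : ℕ} (A : Matrix (Fin (m + 1)) (Fin (m + 1)) R) (i j : Fin (m + 1)) :
    |(A.submatrix i.succAbove j.succAbove).det| = |A.adjugate j i| := by
  rw [adjugate_fin_succ_eq_det_submatrix, abs_mul, abs_pow, abs_neg, abs_one, one_pow, one_mul]

end Matrix

open Matrix

/-- Let `H` be an `N×N` real symmetric tridiagonal matrix (`N ≥ 2`)
with all off-diagonal entries `H_{k,k+1}` nonzero, so that `H` has pairwise distinct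
eigenvalues `λ_1 < ⋯ < λ_N`.  Set `M_i = λ_i I − H`.  Then for every `i`:
(i) for every `k`, `|det((M_i)_{k|k})| < ∏_{j≠i} |λ_i − λ_j|`; and
(ii) for every `k ≤ N−1`, `√2 · |det((M_i)_{k|k+1})| < ∏_{j≠i} |λ_i − λ_j|`. -/
theorem tridiagonal_minor_det_bounds {n : ℕ}
    (H : Matrix (Fin (n + 2)) (Fin (n + 2)) ℝ)
    (hsymm : H.IsSymm)
    (htri : ∀ i j : Fin (n + 2), (i : ℕ) + 1 < (j : ℕ) → H i j = 0)
    (hb : ∀ k : Fin (n + 1), H k.castSucc k.succ ≠ 0)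
    (lam : Fin (n + 2) → ℝ) (hmono : StrictMono lam)
    (hchar : H.charpoly = ∏ j, (Polynomial.X - Polynomial.C (lam j)))
    (M : Fin (n + 2) → Matrix (Fin (n + 2)) (Fin (n + 2)) ℝ)
    (hM : ∀ i, M i = lam i • (1 : Matrix (Fin (n + 2)) (Fin (n + 2)) ℝ) - H)
    (i : Fin (n + 2)) :
    (∀ k : Fin (n + 2),
      |((M i).submatrix k.succAbove k.succAbove).det|
        < ∏ j ∈ Finset.univ.erase i, |lam i - lam j|)
    ∧ (∀ k : Fin (n + 1),
      Real.sqrt 2 * |((M i).submatrix (k.castSucc).succAbove (k.succ).succAbove).det|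
        < ∏ j ∈ Finset.univ.erase i, |lam i - lam j|) := by
  have hoff : ∀ p q, p ≠ q → M i p q = -H p q := fun p q hpq => by
    simp [hM, one_apply_ne hpq]
  have hsup : ∀ k : Fin (n + 1), M i k.castSucc k.succ ≠ 0 := fun k => by
    rw [hoff _ _ (Fin.castSucc_lt_succ (i := k)).ne, neg_ne_zero]
    exact hb k
  have hsymmM : (M i).IsSymm := hM i ▸ (isSymm_one.smul _).sub hsymm
  have hker : ∀ v, M i *ᵥ v = 0 → v 0 = 0 → v = 0 := fun v =>
    eq_zero_of_mulVec_eq_zero_of_apply_zero_eq_zero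
      (fun p q hpq => by rw [hoff p q (by omega), htri p q hpq, neg_zero]) hsup
  have hscalar : M i = scalar _ (lam i) - H := by
    rw [hM, smul_one_eq_diagonal, scalar_apply]
  have hdet : (M i).det = 0 := hscalar ▸ det_scalar_sub_eq_zero_of_charpoly_eq_prod hchar i
  have htr : trace (M i).adjugate = ∏ j ∈ Finset.univ.erase i, (lam i - lam j) :=
    hscalar ▸ trace_adjugate_scalar_sub_of_charpoly_eq_prod hchar i
  have htr₀ : trace (M i).adjugate ≠ 0 := htr ▸ Finset.prod_ne_zero_iff.mpr fun j hj =>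
    sub_ne_zero.mpr (hmono.injective.ne (Finset.ne_of_mem_erase hj).symm)
  refine ⟨fun k => ?_, fun k => ?_⟩
  · obtain ⟨p, hp⟩ := hsymmM.exists_apply_ne_zero hsup k
    rw [abs_det_submatrix_succAbove, ← Finset.abs_prod, ← htr]
    exact hsymmM.abs_adjugate_apply_self_lt hdet hker htr₀ hp
  · rw [abs_det_submatrix_succAbove, ← Finset.abs_prod, ← htr]
    exact hsymmM.sqrt_two_mul_abs_adjugate_lt hdet hker htr₀ (Fin.castSucc_lt_succ (i := k)).ne'
end

section
/- Let H be an N×N real symmetric tridiagonal matrix with N ≥ 2, and let λ and μ be two distinct real eigenvalues of H. Set M = λ I_N − H and M' = μ I_N − H. Then: ∑_{k=1}^N det(M_{k|k}) · det(M'_{k|k}) + 2 ∑_{k=1}^{N−1} det(M_{k|k+1}) · det(M'_{k|k+1}) + 2 ∑_{1 ≤ k < ℓ ≤ N, ℓ−k > 1} det(M_{k|ℓ}) · det(M'_{ℓ|k}) = 0. -/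
/-!
Up to signs that cancel, `det (M_{a|b}) * det (M'_{b|a}) = (adj M)_{ba} * (adj M')_{ab}`, so the sum
over all pairs `(a, b)` is `tr (adj M' * adj M)`. Since `M' = M + (μ - λ) I` and `M * adj M = 0`,
we get `M' * adj M = (μ - λ) adj M`, and multiplying by `adj M'` (with `adj M' * M' = 0`) gives
`adj M' * adj M = 0` because `λ ≠ μ`. By symmetry of `M` and `M'` the summand is invariant under
`(a, b) ↦ (b, a)`, so the full sum is the diagonal plus twice the strictly upper part, which
splits into the superdiagonal and the pairs with `b - a > 1`.
-/

open Matrix Finset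

namespace Matrix

variable {R : Type*} [CommRing R]

theorem det_submatrix_succAbove_mul_det_submatrix_succAbove {n : ℕ}
    (A B : Matrix (Fin (n + 1)) (Fin (n + 1)) R) (i j : Fin (n + 1)) :
    (A.submatrix i.succAbove j.succAbove).det * (B.submatrix j.succAbove i.succAbove).det
      = A.adjugate j i * B.adjugate i j := by
  rw [adjugate_fin_succ_eq_det_submatrix, adjugate_fin_succ_eq_det_submatrix,
    mul_mul_mul_comm, ← pow_add, add_comm (j : ℕ), Even.neg_one_pow ⟨_, rfl⟩, one_mul]

theorem sum_det_submatrix_succAbove_mul_det_submatrix_succAbove {n : ℕ}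
    (A B : Matrix (Fin (n + 1)) (Fin (n + 1)) R) :
    ∑ p : Fin (n + 1) × Fin (n + 1),
        (A.submatrix p.1.succAbove p.2.succAbove).det
          * (B.submatrix p.2.succAbove p.1.succAbove).det
      = trace (B.adjugate * A.adjugate) := by
  simp only [Fintype.sum_prod_type, det_submatrix_succAbove_mul_det_submatrix_succAbove, trace,
    diag_apply, mul_apply, mul_comm (A.adjugate _ _)]

theorem IsSymm.det_submatrix_comm {m n α : Type*} [Fintype m] [DecidableEq m] [CommRing α]
    {A : Matrix n n α} (hA : A.IsSymm) (e f : m → n) :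
    (A.submatrix e f).det = (A.submatrix f e).det := by
  rw [← det_transpose, transpose_submatrix, hA.eq]

variable {n : Type*} [Fintype n] [DecidableEq n]

theorem adjugate_sub_mul_adjugate_sub_eq_zero [IsDomain R] (H : Matrix n n R) {a b : R}
    (hab : a ≠ b) (ha : (a • 1 - H).det = 0) (hb : (b • 1 - H).det = 0) :
    (b • 1 - H).adjugate * (a • 1 - H).adjugate = 0 := by
  have hshift : b • 1 - H = (a • 1 - H) + (b - a) • 1 := by rw [sub_smul]; abel
  have : (b - a) • ((b • 1 - H).adjugate * (a • 1 - H).adjugate) = 0 := calc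
    _ = (b • 1 - H).adjugate * ((a • 1 - H + (b - a) • 1) * (a • 1 - H).adjugate) := by
        rw [add_mul, mul_adjugate, ha, zero_smul, zero_add, smul_mul, one_mul, Matrix.mul_smul]
    _ = (b • 1 - H).adjugate * ((b • 1 - H) * (a • 1 - H).adjugate) := by rw [← hshift]
    _ = 0 := by rw [← Matrix.mul_assoc, adjugate_mul, hb, zero_smul, Matrix.zero_mul]
  exact (smul_eq_zero.mp this).resolve_left (sub_ne_zero.mpr hab.symm)

end Matrix

theorem Finset.sum_prod_eq_sum_diag_add_two_mul_sum_lt {ι R : Type*} [Fintype ι] [LinearOrder ι]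
    [NonAssocSemiring R] (f : ι × ι → R) (hf : ∀ p, f p.swap = f p) :
    ∑ p, f p = ∑ i, f (i, i) + 2 * ∑ p with p.1 < p.2, f p := by
  have hlower : ∑ p with p.2 < p.1, f p = ∑ p with p.1 < p.2, f p :=
    sum_equiv (Equiv.prodComm ι ι) (by simp) fun p _ => (hf p).symm
  have hdiag : ∑ p with p.1 = p.2, f p = ∑ i, f (i, i) := by
    rw [← univ_product_univ, ← diag_eq_filter, sum_diag]
  rw [two_mul, ← hdiag, ← add_assoc]
  nth_rw 2 [← hlower]
  simp only [sum_filter, ← sum_add_distrib]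
  refine sum_congr rfl fun p _ => ?_
  rcases lt_trichotomy p.1 p.2 with h | h | h
  · simp [h, h.ne, h.not_gt]
  · simp [h]
  · simp [h, h.ne', h.not_gt]

theorem Fin.sum_filter_lt_eq_sum_castSucc_succ_add {m : ℕ} {R : Type*} [AddCommMonoid R]
    (f : Fin (m + 1) × Fin (m + 1) → R) :
    ∑ p with p.1 < p.2, f p
      = ∑ k : Fin m, f (k.castSucc, k.succ) + ∑ p with (p.1 : ℕ) + 1 < p.2, f p := by
  have hadj : ∑ p with (p.1 : ℕ) + 1 = p.2, f p = ∑ k : Fin m, f (k.castSucc, k.succ) := by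
    refine (sum_bij (fun k _ => (k.castSucc, k.succ)) (by simp) (by simp)
      (fun p hp => ⟨⟨p.1, by simp at hp; omega⟩, by simp, ?_⟩) (by simp)).symm
    simp only [mem_filter, mem_univ, true_and] at hp
    ext <;> simp [hp]
  rw [← hadj, ← sum_filter_add_sum_filter_not _
    fun p : Fin (m + 1) × Fin (m + 1) => (p.1 : ℕ) + 1 = p.2, filter_filter, filter_filter]
  congr 2 <;> ext p <;> simp only [mem_filter, mem_univ, true_and, Fin.lt_def] <;> omega

theorem tridiagonal_distinct_eigen_minor_orthogonality_general {n : ℕ}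
    (H : Matrix (Fin (n + 2)) (Fin (n + 2)) ℝ)
    (hsymm : H.IsSymm)
    (lam mu : ℝ) (hne : lam ≠ mu)
    (M M' : Matrix (Fin (n + 2)) (Fin (n + 2)) ℝ)
    (hM : M = lam • (1 : Matrix (Fin (n + 2)) (Fin (n + 2)) ℝ) - H)
    (hM' : M' = mu • (1 : Matrix (Fin (n + 2)) (Fin (n + 2)) ℝ) - H)
    (hev : M.det = 0) (hev' : M'.det = 0) :
    ∑ k : Fin (n + 2),
        (M.submatrix k.succAbove k.succAbove).det
          * (M'.submatrix k.succAbove k.succAbove).det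
      + 2 * ∑ k : Fin (n + 1),
          (M.submatrix (k.castSucc).succAbove (k.succ).succAbove).det
            * (M'.submatrix (k.castSucc).succAbove (k.succ).succAbove).det
      + 2 * ∑ p ∈ Finset.univ.filter
            (fun p : Fin (n + 2) × Fin (n + 2) => (p.1 : ℕ) + 1 < (p.2 : ℕ)),
          (M.submatrix p.1.succAbove p.2.succAbove).det
            * (M'.submatrix p.2.succAbove p.1.succAbove).det
      = 0 := by
  have hMsymm : M.IsSymm := hM ▸ (isSymm_one.smul lam).sub hsymm
  have hM'symm : M'.IsSymm := hM' ▸ (isSymm_one.smul mu).sub hsymm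
  set f : Fin (n + 2) × Fin (n + 2) → ℝ := fun p =>
    (M.submatrix p.1.succAbove p.2.succAbove).det * (M'.submatrix p.2.succAbove p.1.succAbove).det
  have hf_total : ∑ p, f p = 0 := by
    subst hM hM'
    rw [sum_det_submatrix_succAbove_mul_det_submatrix_succAbove,
      adjugate_sub_mul_adjugate_sub_eq_zero H hne hev hev', trace_zero]
  have hf_swap : ∀ p, f p.swap = f p := fun p => by
    simp only [f, Prod.fst_swap, Prod.snd_swap, hMsymm.det_submatrix_comm p.2.succAbove,
      hM'symm.det_submatrix_comm p.1.succAbove]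
  have hf_adjacent : ∀ k : Fin (n + 1),
      (M.submatrix k.castSucc.succAbove k.succ.succAbove).det
        * (M'.submatrix k.castSucc.succAbove k.succ.succAbove).det = f (k.castSucc, k.succ) := by
    intro k
    rw [hM'symm.det_submatrix_comm]
  simp only [hf_adjacent]
  rw [← hf_total, sum_prod_eq_sum_diag_add_two_mul_sum_lt f hf_swap,
    Fin.sum_filter_lt_eq_sum_castSucc_succ_add, mul_add, add_assoc]

/-- Let `H` be an `N×N` real symmetric tridiagonal matrix (`N ≥ 2`)
and let `λ ≠ μ` be two distinct real eigenvalues of `H`.  With `M = λ I − H` and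
`M' = μ I − H`, one has
`∑_k det(M_{k|k}) det(M'_{k|k}) + 2 ∑_{k=1}^{N−1} det(M_{k|k+1}) det(M'_{k|k+1})`
`+ 2 ∑_{ℓ−k>1} det(M_{k|ℓ}) det(M'_{ℓ|k}) = 0`. -/
theorem tridiagonal_distinct_eigen_minor_orthogonality {n : ℕ}
    (H : Matrix (Fin (n + 2)) (Fin (n + 2)) ℝ)
    (hsymm : H.IsSymm)
    (htri : ∀ i j : Fin (n + 2), (i : ℕ) + 1 < (j : ℕ) → H i j = 0)
    (lam mu : ℝ) (hne : lam ≠ mu)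
    (M M' : Matrix (Fin (n + 2)) (Fin (n + 2)) ℝ)
    (hM : M = lam • (1 : Matrix (Fin (n + 2)) (Fin (n + 2)) ℝ) - H)
    (hM' : M' = mu • (1 : Matrix (Fin (n + 2)) (Fin (n + 2)) ℝ) - H)
    (hev : M.det = 0) (hev' : M'.det = 0) :
    ∑ k : Fin (n + 2),
        (M.submatrix k.succAbove k.succAbove).det
          * (M'.submatrix k.succAbove k.succAbove).det
      + 2 * ∑ k : Fin (n + 1),
          (M.submatrix (k.castSucc).succAbove (k.succ).succAbove).det
            * (M'.submatrix (k.castSucc).succAbove (k.succ).succAbove).det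
      + 2 * ∑ p ∈ Finset.univ.filter
            (fun p : Fin (n + 2) × Fin (n + 2) => (p.1 : ℕ) + 1 < (p.2 : ℕ)),
          (M.submatrix p.1.succAbove p.2.succAbove).det
            * (M'.submatrix p.2.succAbove p.1.succAbove).det
      = 0 :=
  tridiagonal_distinct_eigen_minor_orthogonality_general H hsymm lam mu hne M M' hM hM' hev hev'
end
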